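/- Let ρ1 ∈ D_{n1} and ρ2 ∈ D_{n2} be density matrices with eigenvalues a_1 ≥ a_2 ≥ ... ≥ a_{n1} and b_1 ≥ b_2 ≥ ... ≥ b_{n2} arranged in descending order. Then for every σ ∈ S(ρ1,ρ2), the largest eigenvalue of σ (equivalently, its operator/spectral norm) satisfies ‖σ‖_2 ≤ Σ_{i=1}^{min(n1,n2)} min{a_i, b_i}. -/

import Mathlib

open Matrix Finset
open scoped ComplexOrder

/-- Partial trace over the first subsystem: `tr_1(ρ) = Σ_j ρ_{jj} ∈ M_{n2}`. -/
noncomputable def trace1 {n1 n2 : ℕ} (ρ : Matrix (Fin n1 × Fin n2) (Fin n1 × Fin n2) ℂ) :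
    Matrix (Fin n2) (Fin n2) ℂ :=
  Matrix.of fun i j => ∑ k : Fin n1, ρ (k, i) (k, j)

/-- Partial trace over the second subsystem: `tr_2(ρ) = (tr ρ_{ij})_{ij} ∈ M_{n1}`. -/
noncomputable def trace2 {n1 n2 : ℕ} (ρ : Matrix (Fin n1 × Fin n2) (Fin n1 × Fin n2) ℂ) :
    Matrix (Fin n1) (Fin n1) ℂ :=
  Matrix.of fun i j => ∑ k : Fin n2, ρ (i, k) (j, k)

/-!
Let `v` be a unit eigenvector of `σ` for the eigenvalue `λ`. Then `Q = λ v v*` satisfies `Q ≤ σ`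
in the Loewner order, so `tr₂ Q ≤ ρ1` and `tr₁ Q ≤ ρ2`, and by Weyl's monotonicity principle the
sorted eigenvalues `αᵢ` of `tr₂ Q` and `βᵢ` of `tr₁ Q` satisfy `αᵢ ≤ aᵢ` and `βᵢ ≤ bᵢ`.
Reshaping `v` into an `n1 × n2` matrix `V`, the marginals are `λ V Vᴴ` and `λ (Vᴴ V)ᵀ`, which have
the same nonzero spectrum (the Schmidt decomposition of `v`). Hence `αᵢ = βᵢ` for `i < min n1 n2`
and `αᵢ = 0` otherwise, and `λ = tr Q = ∑ αᵢ ≤ ∑_{i < min n1 n2} min aᵢ bᵢ`.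
-/

open scoped MatrixOrder

theorem Fin.eq_of_antitone_of_map_eq {γ : Type*} [PartialOrder γ] {n : ℕ} {f g : Fin n → γ}
    (hf : Antitone f) (hg : Antitone g) (h : univ.val.map f = univ.val.map g) : f = g :=
  List.ofFn_injective <| List.Perm.eq_of_sortedGE hf.sortedGE_ofFn hg.sortedGE_ofFn <| by
    rwa [Fin.univ_val_map, Fin.univ_val_map, Multiset.coe_eq_coe] at h

theorem Antitone.sortedGE_ofFn_append_replicate {γ : Type*} [PartialOrder γ] {n : ℕ}
    {f : Fin n → γ} (hf : Antitone f) {c : γ} (hc : ∀ i, c ≤ f i) (k : ℕ) :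
    (List.ofFn f ++ List.replicate k c).SortedGE := by
  simp only [List.sortedGE_iff_pairwise, List.pairwise_append, List.pairwise_replicate,
    List.mem_ofFn, List.mem_replicate]
  refine ⟨List.sortedGE_iff_pairwise.mp hf.sortedGE_ofFn, Or.inr le_rfl, ?_⟩
  rintro _ ⟨i, rfl⟩ _ ⟨-, rfl⟩
  exact hc i

theorem Fin.ofFn_append_replicate_eq_of_antitone {γ : Type*} [PartialOrder γ] {m n k l : ℕ}
    {f : Fin m → γ} {g : Fin n → γ} (hf : Antitone f) (hg : Antitone g) {c : γ}
    (hfc : ∀ i, c ≤ f i) (hgc : ∀ i, c ≤ g i)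
    (h : univ.val.map f + Multiset.replicate k c = univ.val.map g + Multiset.replicate l c) :
    List.ofFn f ++ List.replicate k c = List.ofFn g ++ List.replicate l c :=
  List.Perm.eq_of_sortedGE (hf.sortedGE_ofFn_append_replicate hfc k)
    (hg.sortedGE_ofFn_append_replicate hgc l) <| by
    rwa [Fin.univ_val_map, Fin.univ_val_map, ← Multiset.coe_replicate, ← Multiset.coe_replicate,
      Multiset.coe_add, Multiset.coe_add, Multiset.coe_eq_coe] at h

theorem Fin.sum_le_sum_min_of_ofFn_append_eq {m n : ℕ} {α a : Fin m → ℝ} {β b : Fin n → ℝ}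
    (h : List.ofFn α ++ List.replicate n 0 = List.ofFn β ++ List.replicate m 0)
    (ha : α ≤ a) (hb : β ≤ b) :
    ∑ i, α i ≤ ∑ i : Fin (min m n),
      min (a (Fin.castLE (Nat.min_le_left m n) i)) (b (Fin.castLE (Nat.min_le_right m n) i)) := by
  have hαβ (i : Fin (min m n)) :
      α (Fin.castLE (Nat.min_le_left m n) i) = β (Fin.castLE (Nat.min_le_right m n) i) := by
    have := congrArg (·[(i : ℕ)]?) h
    simp only [List.getElem?_append, List.length_ofFn, lt_min_iff.mp i.2, if_true, getElem?_pos,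
      List.getElem_ofFn, Option.some.injEq] at this
    exact this
  have hα0 (i : Fin m) (hi : n ≤ i) : α i = 0 := by
    have := congrArg (·[(i : ℕ)]?) h
    simpa [hi, List.getElem?_append, (by omega : (i : ℕ) - n < m)] using this
  calc ∑ i, α i = ∑ i : Fin (min m n), α (Fin.castLE (Nat.min_le_left m n) i) := by
        refine ((sum_subset (subset_univ (univ.map (Fin.castLEEmb (Nat.min_le_left m n))))
          fun j _ hj => hα0 j ?_).symm.trans (sum_map _ _ _))
        by_contra! hjn
        exact hj (mem_map.2 ⟨⟨j, lt_min j.2 hjn⟩, mem_univ _, rfl⟩)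
    _ ≤ _ := sum_le_sum fun i _ => le_min (ha _) (hαβ i ▸ hb _)

section Weyl

open Module RCLike
open scoped InnerProductSpace

theorem Submodule.finrank_span_image_eq_card {R M ι : Type*} [Ring R] [StrongRankCondition R]
    [Nontrivial R] [AddCommGroup M] [Module R M] {v : ι → M} (hv : LinearIndependent R v)
    (s : Finset ι) : finrank R (span R (v '' s)) = s.card := by
  rw [Set.image_eq_range, ← Fintype.card_coe]
  exact finrank_span_eq_card (hv.comp _ Subtype.val_injective)

theorem OrthonormalBasis.repr_eq_zero_of_mem_span {ι 𝕜 E : Type*} [Fintype ι] [RCLike 𝕜]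
    [NormedAddCommGroup E] [InnerProductSpace 𝕜 E] {b : OrthonormalBasis ι 𝕜 E} {s : Set ι}
    {x : E} (hx : x ∈ Submodule.span 𝕜 (b '' s)) {j : ι} (hj : j ∉ s) : b.repr x j = 0 := by
  rw [← b.coe_toBasis, Module.Basis.mem_span_image] at hx
  rw [← b.coe_toBasis_repr_apply]
  exact Finsupp.notMem_support_iff.mp fun h => hj (hx h)

namespace LinearMap.IsSymmetric

variable {𝕜 E : Type*} [RCLike 𝕜] [NormedAddCommGroup E] [InnerProductSpace 𝕜 E]
  [FiniteDimensional 𝕜 E] {T : E →ₗ[𝕜] E} {n : ℕ}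

theorem re_inner_apply_self_eq_sum (hT : T.IsSymmetric) (hn : finrank 𝕜 E = n) (x : E) :
    re ⟪x, T x⟫_𝕜 = ∑ j, hT.eigenvalues hn j * ‖(hT.eigenvectorBasis hn).repr x j‖ ^ 2 := by
  set u := hT.eigenvectorBasis hn
  have : ⟪x, T x⟫_𝕜 = ∑ j, ((hT.eigenvalues hn j * ‖u.repr x j‖ ^ 2 : ℝ) : 𝕜) := by
    rw [← u.sum_inner_mul_inner]
    refine Finset.sum_congr rfl fun j _ => ?_
    rw [← u.repr_apply_apply, hT.eigenvectorBasis_apply_self_apply, ← inner_conj_symm,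
      ← u.repr_apply_apply]
    push_cast
    rw [← RCLike.conj_mul]
    ring
  rw [this, ← RCLike.ofReal_sum, RCLike.ofReal_re]

theorem le_re_inner_apply_self_of_mem_span (hT : T.IsSymmetric) (hn : finrank 𝕜 E = n)
    {s : Set (Fin n)} {c : ℝ} (hc : ∀ j ∈ s, c ≤ hT.eigenvalues hn j) {x : E}
    (hx : x ∈ Submodule.span 𝕜 (hT.eigenvectorBasis hn '' s)) :
    c * ‖x‖ ^ 2 ≤ re ⟪x, T x⟫_𝕜 := by
  rw [re_inner_apply_self_eq_sum hT hn, ← (hT.eigenvectorBasis hn).repr.norm_map,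
    EuclideanSpace.norm_sq_eq, Finset.mul_sum]
  refine Finset.sum_le_sum fun j _ => ?_
  by_cases hj : j ∈ s
  · exact mul_le_mul_of_nonneg_right (hc j hj) (sq_nonneg _)
  · simp [OrthonormalBasis.repr_eq_zero_of_mem_span hx hj]

theorem re_inner_apply_self_le_of_mem_span (hT : T.IsSymmetric) (hn : finrank 𝕜 E = n)
    {s : Set (Fin n)} {c : ℝ} (hc : ∀ j ∈ s, hT.eigenvalues hn j ≤ c) {x : E}
    (hx : x ∈ Submodule.span 𝕜 (hT.eigenvectorBasis hn '' s)) :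
    re ⟪x, T x⟫_𝕜 ≤ c * ‖x‖ ^ 2 := by
  rw [re_inner_apply_self_eq_sum hT hn, ← (hT.eigenvectorBasis hn).repr.norm_map,
    EuclideanSpace.norm_sq_eq, Finset.mul_sum]
  refine Finset.sum_le_sum fun j _ => ?_
  by_cases hj : j ∈ s
  · exact mul_le_mul_of_nonneg_right (hc j hj) (sq_nonneg _)
  · simp [OrthonormalBasis.repr_eq_zero_of_mem_span hx hj]

theorem eigenvalues_le_eigenvalues {S : E →ₗ[𝕜] E} (hT : T.IsSymmetric) (hS : S.IsSymmetric)
    (hn : finrank 𝕜 E = n) (hTS : T ≤ S) (i : Fin n) :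
    hT.eigenvalues hn i ≤ hS.eigenvalues hn i := by
  set U := Submodule.span 𝕜 (hT.eigenvectorBasis hn '' ↑(Finset.Iic i))
  set W := Submodule.span 𝕜 (hS.eigenvectorBasis hn '' ↑(Finset.Ici i))
  have hUW : ¬ Disjoint U W := fun h => by
    have := Submodule.finrank_add_finrank_le_of_disjoint h
    rw [Submodule.finrank_span_image_eq_card (hT.eigenvectorBasis hn).orthonormal.linearIndependent,
      Submodule.finrank_span_image_eq_card (hS.eigenvectorBasis hn).orthonormal.linearIndependent,
      Fin.card_Iic, Fin.card_Ici, hn] at this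
    omega
  obtain ⟨x, hxU, hxW, hx0⟩ : ∃ x ∈ U, x ∈ W ∧ x ≠ 0 := by
    simpa [Submodule.disjoint_def] using hUW
  have hlow := le_re_inner_apply_self_of_mem_span hT hn
    (fun j hj => hT.eigenvalues_antitone hn (Finset.mem_Iic.mp hj)) hxU
  have hhigh := re_inner_apply_self_le_of_mem_span hS hn
    (fun j hj => hS.eigenvalues_antitone hn (Finset.mem_Ici.mp hj)) hxW
  have hmid : re ⟪x, T x⟫_𝕜 ≤ re ⟪x, S x⟫_𝕜 := by
    have := hTS.re_inner_nonneg_right x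
    rwa [LinearMap.sub_apply, inner_sub_right, map_sub, sub_nonneg] at this
  exact le_of_mul_le_mul_right (hlow.trans (hmid.trans hhigh)) (by positivity)

end LinearMap.IsSymmetric

end Weyl

namespace Matrix

variable {𝕜 : Type*} [RCLike 𝕜]

namespace IsHermitian

variable {n : ℕ} {A B : Matrix (Fin n) (Fin n) 𝕜}

/-- Unlike `IsHermitian.eigenvalues`, which is indexed through an arbitrary equivalence, these are
sorted in decreasing order; unlike `IsHermitian.eigenvalues₀`, they are indexed by `Fin n`. -/
noncomputable def sortedEigenvalues (hA : A.IsHermitian) : Fin n → ℝ :=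
  hA.eigenvalues₀ ∘ Fin.cast (Fintype.card_fin n).symm

theorem sortedEigenvalues_antitone (hA : A.IsHermitian) : Antitone hA.sortedEigenvalues :=
  hA.eigenvalues₀_antitone.comp_monotone fun _ _ h => h

theorem map_sortedEigenvalues (hA : A.IsHermitian) :
    Finset.univ.val.map hA.sortedEigenvalues = Finset.univ.val.map hA.eigenvalues := by
  have hsorted : hA.sortedEigenvalues = hA.eigenvalues₀ ∘ finCongr (Fintype.card_fin n).symm :=
    rfl
  have hunsorted : hA.eigenvalues =
      hA.eigenvalues₀ ∘ (Fintype.equivOfCardEq (Fintype.card_fin _)).symm :=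
    rfl
  rw [hsorted, hunsorted, ← Multiset.map_map, ← Multiset.map_map, Multiset.map_univ_val_equiv,
    Multiset.map_univ_val_equiv]

theorem eq_sortedEigenvalues_of_map_eq (hA : A.IsHermitian) {a : Fin n → ℝ} (ha : Antitone a)
    (h : Finset.univ.val.map a = Finset.univ.val.map hA.eigenvalues) : a = hA.sortedEigenvalues :=
  Fin.eq_of_antitone_of_map_eq ha hA.sortedEigenvalues_antitone
    (h.trans hA.map_sortedEigenvalues.symm)

theorem sortedEigenvalues_le_of_le (hA : A.IsHermitian) (hB : B.IsHermitian) (hAB : A ≤ B)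
    (i : Fin n) : hA.sortedEigenvalues i ≤ hB.sortedEigenvalues i := by
  refine LinearMap.IsSymmetric.eigenvalues_le_eigenvalues _ _ _ ?_ _
  rw [LinearMap.le_def, ← map_sub, isPositive_toEuclideanLin_iff]
  exact hAB

theorem trace_eq_sum_sortedEigenvalues (hA : A.IsHermitian) :
    A.trace = ∑ i, (hA.sortedEigenvalues i : 𝕜) := by
  rw [hA.trace_eq_sum_eigenvalues, ← RCLike.ofReal_sum, ← RCLike.ofReal_sum,
    Finset.sum_eq_multiset_sum, Finset.sum_eq_multiset_sum, map_sortedEigenvalues]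

open Polynomial in
theorem roots_X_pow_mul_charpoly (hA : A.IsHermitian) (k : ℕ) :
    (X ^ k * A.charpoly).roots =
      (Finset.univ.val.map hA.sortedEigenvalues + Multiset.replicate k 0).map RCLike.ofReal := by
  rw [roots_mul ((monic_X_pow k).mul A.charpoly_monic).ne_zero, roots_X_pow,
    hA.roots_charpoly_eq_eigenvalues, Multiset.map_add, ← Multiset.map_map, map_sortedEigenvalues,
    add_comm, Multiset.map_replicate, RCLike.ofReal_zero, Multiset.nsmul_singleton]

open Polynomial in
theorem map_sortedEigenvalues_add_replicate_eq {m : ℕ} {B : Matrix (Fin m) (Fin m) 𝕜}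
    (hA : A.IsHermitian) (hB : B.IsHermitian) (h : X ^ m * A.charpoly = X ^ n * B.charpoly) :
    Finset.univ.val.map hA.sortedEigenvalues + Multiset.replicate m 0 =
      Finset.univ.val.map hB.sortedEigenvalues + Multiset.replicate n 0 :=
  Multiset.map_injective RCLike.ofReal_injective <| by
    rw [← roots_X_pow_mul_charpoly, ← roots_X_pow_mul_charpoly, h]

end IsHermitian

theorem PosSemidef.smul_vecMulVec_star_le {ι : Type*} [Fintype ι] [DecidableEq ι]
    {A : Matrix ι ι 𝕜} (hA : A.PosSemidef) {v : ι → 𝕜} {r : ℝ} (hv : A *ᵥ v = r • v)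
    (hv1 : star v ⬝ᵥ v = 1) : r • vecMulVec v (star v) ≤ A := by
  set P := vecMulVec v (star v)
  have hAP : A * P = r • P := by rw [mul_vecMulVec, hv, smul_vecMulVec]
  have hPA : P * A = r • P := by
    rw [vecMulVec_mul, ← hA.1, ← star_mulVec, hv, star_smul, star_trivial, vecMulVec_smul]
  have hPP : P * P = P := by rw [vecMulVec_mul_vecMulVec, hv1, one_smul]
  have hPH : Pᴴ = P := by rw [conjTranspose_vecMulVec, star_star]
  -- `A - r • P` is the compression of `A` to the orthogonal complement of `v`
  have key : A - r • P = (1 - P)ᴴ * A * (1 - P) := by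
    rw [conjTranspose_sub, conjTranspose_one, hPH, sub_mul, one_mul, mul_sub, mul_one,
      sub_mul, hAP, hPA, smul_mul_assoc, hPP]
    abel
  rw [le_iff, key]
  exact hA.conjTranspose_mul_mul_same _

theorem PosSemidef.sortedEigenvalues_nonneg {n : ℕ} {A : Matrix (Fin n) (Fin n) 𝕜}
    (hA : A.PosSemidef) (i : Fin n) : 0 ≤ hA.1.sortedEigenvalues i :=
  (isPositive_toEuclideanLin_iff.mpr hA).nonneg_eigenvalues _ _

end Matrix

section PartialTrace

variable {n1 n2 : ℕ} {A B : Matrix (Fin n1 × Fin n2) (Fin n1 × Fin n2) ℂ}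

theorem trace1_eq_sum_submatrix (A : Matrix (Fin n1 × Fin n2) (Fin n1 × Fin n2) ℂ) :
    trace1 A = ∑ k, A.submatrix (k, ·) (k, ·) := by
  ext i j
  simp [trace1, Matrix.sum_apply]

theorem trace2_eq_sum_submatrix (A : Matrix (Fin n1 × Fin n2) (Fin n1 × Fin n2) ℂ) :
    trace2 A = ∑ k, A.submatrix (·, k) (·, k) := by
  ext i j
  simp [trace2, Matrix.sum_apply]

theorem posSemidef_trace1 (hA : A.PosSemidef) : (trace1 A).PosSemidef := by
  rw [trace1_eq_sum_submatrix]
  exact posSemidef_sum _ fun k _ => hA.submatrix _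

theorem posSemidef_trace2 (hA : A.PosSemidef) : (trace2 A).PosSemidef := by
  rw [trace2_eq_sum_submatrix]
  exact posSemidef_sum _ fun k _ => hA.submatrix _

theorem trace1_sub (A B : Matrix (Fin n1 × Fin n2) (Fin n1 × Fin n2) ℂ) :
    trace1 (A - B) = trace1 A - trace1 B := by
  ext i j
  simp [trace1, Finset.sum_sub_distrib]

theorem trace2_sub (A B : Matrix (Fin n1 × Fin n2) (Fin n1 × Fin n2) ℂ) :
    trace2 (A - B) = trace2 A - trace2 B := by
  ext i j
  simp [trace2, Finset.sum_sub_distrib]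

theorem trace1_mono (hAB : A ≤ B) : trace1 A ≤ trace1 B := by
  rw [le_iff, ← trace1_sub]
  exact posSemidef_trace1 hAB

theorem trace2_mono (hAB : A ≤ B) : trace2 A ≤ trace2 B := by
  rw [le_iff, ← trace2_sub]
  exact posSemidef_trace2 hAB

theorem trace_trace2 (A : Matrix (Fin n1 × Fin n2) (Fin n1 × Fin n2) ℂ) :
    (trace2 A).trace = A.trace := by
  simp [trace2, Matrix.trace, Fintype.sum_prod_type]

theorem trace1_vecMulVec (x y : Fin n1 × Fin n2 → ℂ) :
    trace1 (vecMulVec x y) = (of (Function.curry x))ᵀ * of (Function.curry y) := by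
  ext i j
  simp [trace1, vecMulVec_apply, mul_apply]

theorem trace2_vecMulVec (x y : Fin n1 × Fin n2 → ℂ) :
    trace2 (vecMulVec x y) = of (Function.curry x) * (of (Function.curry y))ᵀ := by
  ext i j
  simp [trace2, vecMulVec_apply, mul_apply]

open Polynomial in
theorem X_pow_mul_charpoly_trace2_vecMulVec (x y : Fin n1 × Fin n2 → ℂ) :
    X ^ n2 * (trace2 (vecMulVec x y)).charpoly = X ^ n1 * (trace1 (vecMulVec x y)).charpoly := by
  rw [trace2_vecMulVec, trace1_vecMulVec, ← charpoly_transpose ((of _)ᵀ * _), transpose_mul,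
    transpose_transpose]
  simpa using charpoly_mul_comm' (of (Function.curry x)) (of (Function.curry y))ᵀ

theorem ofFn_sortedEigenvalues_trace2_append_eq (x y : Fin n1 × Fin n2 → ℂ)
    (h2 : (trace2 (vecMulVec x y)).PosSemidef) (h1 : (trace1 (vecMulVec x y)).PosSemidef) :
    List.ofFn h2.1.sortedEigenvalues ++ List.replicate n2 0 =
      List.ofFn h1.1.sortedEigenvalues ++ List.replicate n1 0 :=
  Fin.ofFn_append_replicate_eq_of_antitone h2.1.sortedEigenvalues_antitone
    h1.1.sortedEigenvalues_antitone h2.sortedEigenvalues_nonneg h1.sortedEigenvalues_nonneg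
    (h2.1.map_sortedEigenvalues_add_replicate_eq h1.1 (X_pow_mul_charpoly_trace2_vecMulVec x y))

end PartialTrace

theorem stmt9_general {n1 n2 : ℕ}
    (ρ1 : Matrix (Fin n1) (Fin n1) ℂ) (ρ2 : Matrix (Fin n2) (Fin n2) ℂ)
    (hρ1 : ρ1.PosSemidef) (hρ2 : ρ2.PosSemidef)
    (a : Fin n1 → ℝ) (b : Fin n2 → ℝ) (haA : Antitone a) (hbA : Antitone b)
    (ha : Finset.univ.val.map a = Finset.univ.val.map hρ1.1.eigenvalues)
    (hb : Finset.univ.val.map b = Finset.univ.val.map hρ2.1.eigenvalues) :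
    ∀ (σ : Matrix (Fin n1 × Fin n2) (Fin n1 × Fin n2) ℂ) (hσ : σ.PosSemidef),
      σ.trace = 1 → trace2 σ = ρ1 → trace1 σ = ρ2 →
        ∀ p, hσ.1.eigenvalues p ≤
          ∑ i : Fin (min n1 n2),
            min (a (Fin.castLE (Nat.min_le_left n1 n2) i))
              (b (Fin.castLE (Nat.min_le_right n1 n2) i)) := by
  intro σ hσ _ hσρ1 hσρ2 p
  set r := hσ.1.eigenvalues p
  set v : Fin n1 × Fin n2 → ℂ := (hσ.1.eigenvectorBasis p).ofLp
  have hv1 : star v ⬝ᵥ v = 1 := by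
    rw [dotProduct_comm, ← EuclideanSpace.inner_eq_star_dotProduct, inner_self_eq_norm_sq_to_K,
      hσ.1.eigenvectorBasis.orthonormal.1 p]
    simp
  have hQσ : r • vecMulVec v (star v) ≤ σ :=
    hσ.smul_vecMulVec_star_le (hσ.1.mulVec_eigenvectorBasis p) hv1
  have hQ : (r • vecMulVec v (star v)).PosSemidef :=
    (posSemidef_vecMulVec_self_star v).smul (hσ.eigenvalues_nonneg p)
  rw [← smul_vecMulVec] at hQσ hQ
  have hQ2 := posSemidef_trace2 hQ
  have hQ1 := posSemidef_trace1 hQ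
  have hα : hQ2.1.sortedEigenvalues ≤ a := by
    rw [hρ1.1.eq_sortedEigenvalues_of_map_eq haA ha]
    exact hQ2.1.sortedEigenvalues_le_of_le _ (hσρ1 ▸ trace2_mono hQσ)
  have hβ : hQ1.1.sortedEigenvalues ≤ b := by
    rw [hρ2.1.eq_sortedEigenvalues_of_map_eq hbA hb]
    exact hQ1.1.sortedEigenvalues_le_of_le _ (hσρ2 ▸ trace1_mono hQσ)
  have hr : r = ∑ i, hQ2.1.sortedEigenvalues i := by
    have := hQ2.1.trace_eq_sum_sortedEigenvalues
    rw [trace_trace2, trace_vecMulVec, dotProduct_comm, dotProduct_smul, hv1, ← RCLike.ofReal_sum,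
      Complex.real_smul, mul_one] at this
    exact Complex.ofReal_injective this
  rw [hr]
  exact Fin.sum_le_sum_min_of_ofFn_append_eq
    (ofFn_sortedEigenvalues_trace2_append_eq _ _ hQ2 hQ1) hα hβ

/-- Upper bound on the largest eigenvalue over `S(ρ1, ρ2)`: if `a`, `b` are the eigenvalues
of `ρ1`, `ρ2` in descending order, then every eigenvalue of every `σ ∈ S(ρ1, ρ2)` is at most
`Σ_{i=1}^{min(n1,n2)} min{a_i, b_i}`. -/
theorem stmt9 {n1 n2 : ℕ}
    (ρ1 : Matrix (Fin n1) (Fin n1) ℂ) (ρ2 : Matrix (Fin n2) (Fin n2) ℂ)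
    (hρ1 : ρ1.PosSemidef) (hρ1tr : ρ1.trace = 1)
    (hρ2 : ρ2.PosSemidef) (hρ2tr : ρ2.trace = 1)
    (a : Fin n1 → ℝ) (b : Fin n2 → ℝ) (haA : Antitone a) (hbA : Antitone b)
    (ha : Finset.univ.val.map a = Finset.univ.val.map hρ1.1.eigenvalues)
    (hb : Finset.univ.val.map b = Finset.univ.val.map hρ2.1.eigenvalues) :
    ∀ (σ : Matrix (Fin n1 × Fin n2) (Fin n1 × Fin n2) ℂ) (hσ : σ.PosSemidef),
      σ.trace = 1 → trace2 σ = ρ1 → trace1 σ = ρ2 →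
        ∀ p, hσ.1.eigenvalues p ≤
          ∑ i : Fin (min n1 n2),
            min (a (Fin.castLE (Nat.min_le_left n1 n2) i))
              (b (Fin.castLE (Nat.min_le_right n1 n2) i)) :=
  stmt9_general ρ1 ρ2 hρ1 hρ2 a b haA hbA ha hb
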